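/- arXiv:1902.04501 — 3 statements merged into one kernel-verified Lean document; each statement's English description precedes it below -/
import Mathlib

section
/- Let R = I - Pᵀ where P is the tridiagonal matrix with P_{i(i+1)} = P_{i(i-1)} = 1/2 for 2 ≤ i ≤ d-1, P_{12} = P_{d(d-1)} = 1/2, and P_{ij}=0 otherwise. Then the row sums of R^{-1} satisfy (R^{-1} 𝟏)_i = i(d+1-i) for every 1 ≤ i ≤ d. -/
/-!
Pad a vector `x` by zeros at both ends, at the positions `0` and `d + 1`. Then
`((1 - Pᵀ) x)ᵢ = xᵢ - (xᵢ₋₁ + xᵢ₊₁) / 2` is minus half the second difference of the padded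
sequence. The parabola `n (d + 1 - n)` vanishes at `0` and `d + 1` and has second difference `-2`,
so it is mapped to `𝟏`. And `1 - Pᵀ` is invertible: a padded kernel vector has vanishing second
differences, so it is linear with value `0` at `0`, and since it also vanishes at `d + 1` it is zero.
-/

open Matrix

/-- The tridiagonal substochastic matrix of the gap process of rank-based diffusions
(indices `0, …, d-1` correspond to ranks `1, …, d`). -/
noncomputable def rankP (d : ℕ) : Matrix (Fin d) (Fin d) ℝ :=
  Matrix.of fun i j => if i.val + 1 = j.val ∨ j.val + 1 = i.val then (1 : ℝ) / 2 else 0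

theorem eq_mul_of_second_diff_eq_zero {R : Type*} [CommRing R] {f : ℕ → R} {N : ℕ}
    (h0 : f 0 = 0) (hf : ∀ n < N, f (n + 2) - 2 * f (n + 1) + f n = 0) :
    ∀ n ≤ N + 1, f n = n * f 1 := by
  intro n hn
  induction n using Nat.strong_induction_on with
  | _ n ih =>
    match n, hn, ih with
    | 0, _, _ => simp [h0]
    | 1, _, _ => simp
    | n + 2, hn, ih =>
      have h := hf n (by omega)
      rw [ih n (by omega) (by omega), ih (n + 1) (by omega) (by omega)] at h
      push_cast at h ⊢
      linear_combination h

section ExtendByZero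

variable {α : Type*} [Zero α] {d : ℕ}

/-- `x k` sits at position `k + 1`, so that the boundary zeros sit at `0` and `d + 1`. -/
def extendByZero (x : Fin d → α) : ℕ → α
  | 0 => 0
  | n + 1 => if h : n < d then x ⟨n, h⟩ else 0

@[simp]
theorem extendByZero_zero (x : Fin d → α) : extendByZero x 0 = 0 := rfl

@[simp]
theorem extendByZero_succ_val (x : Fin d → α) (k : Fin d) : extendByZero x (k + 1) = x k := by
  simp [extendByZero]

theorem extendByZero_of_lt (x : Fin d → α) {n : ℕ} (hn : d < n) : extendByZero x n = 0 := by
  obtain ⟨m, rfl⟩ : ∃ m, n = m + 1 := ⟨n - 1, by omega⟩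
  exact dif_neg (by omega)

end ExtendByZero

theorem one_sub_rankP_transpose_mulVec_apply {d : ℕ} (x : Fin d → ℝ) (i : Fin d) :
    ((1 - (rankP d)ᵀ) *ᵥ x) i =
      extendByZero x (i + 1) - (extendByZero x i + extendByZero x (i + 2)) / 2 := by
  have hsum : ((rankP d)ᵀ *ᵥ x) i
      = ∑ k ∈ Finset.range d, ((if k + 1 = (i : ℕ) then extendByZero x (k + 1) else 0)
          + (if k = i + 1 then extendByZero x (k + 1) else 0)) / 2 := by
    rw [Finset.sum_range, mulVec, dotProduct]
    refine Finset.sum_congr rfl fun k _ => ?_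
    simp only [rankP, transpose_apply, of_apply, extendByZero_succ_val]
    split_ifs <;> first | omega | ring
  have hlow : ∑ k ∈ Finset.range d, (if k + 1 = i then extendByZero x (k + 1) else 0)
      = extendByZero x i := by
    rcases i with ⟨_ | j, hi⟩
    · simp
    · simp [Finset.sum_ite_eq', show j < d by omega]
  have hhigh : ∑ k ∈ Finset.range d, (if k = i + 1 then extendByZero x (k + 1) else 0)
      = extendByZero x (i + 2) := by
    rw [Finset.sum_ite_eq']
    split_ifs with h
    · rfl
    · exact (extendByZero_of_lt x (by rw [Finset.mem_range] at h; omega)).symm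
  rw [sub_mulVec, one_mulVec, Pi.sub_apply, hsum, ← Finset.sum_div, Finset.sum_add_distrib,
    hlow, hhigh, extendByZero_succ_val]

theorem one_sub_rankP_transpose_mulVec_injective (d : ℕ) :
    Function.Injective (1 - (rankP d)ᵀ).mulVec := by
  suffices h : ∀ x, (1 - (rankP d)ᵀ) *ᵥ x = 0 → x = 0 by
    intro x y hxy
    simpa [sub_eq_zero] using h (x - y) (by rw [mulVec_sub, hxy, sub_self])
  intro x hx
  have hrec : ∀ n < d, extendByZero x (n + 2) - 2 * extendByZero x (n + 1) + extendByZero x n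
      = 0 := fun n hn => by
    have := one_sub_rankP_transpose_mulVec_apply x ⟨n, hn⟩
    rw [hx, Pi.zero_apply] at this
    dsimp only at this
    linear_combination 2 * this
  have hlin := eq_mul_of_second_diff_eq_zero (extendByZero_zero x) hrec
  have he1 : extendByZero x 1 = 0 := by
    have h := hlin (d + 1) le_rfl
    rw [extendByZero_of_lt x d.lt_succ_self, eq_comm, mul_eq_zero] at h
    exact h.resolve_left (by positivity)
  funext k
  rw [← extendByZero_succ_val x k, hlin _ (by omega), he1, mul_zero, Pi.zero_apply]

theorem one_sub_rankP_transpose_mulVec_parabola (d : ℕ) :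
    (1 - (rankP d)ᵀ) *ᵥ (fun k : Fin d => ((k : ℝ) + 1) * ((d : ℝ) - k)) = fun _ => 1 := by
  funext i
  have he : ∀ n ≤ d + 1, extendByZero (fun k : Fin d => ((k : ℝ) + 1) * ((d : ℝ) - k)) n
      = n * ((d : ℝ) + 1 - n) := by
    rintro (_ | n) hn
    · simp
    · rcases Nat.lt_or_ge n d with h | h
      · simp [extendByZero, h]
      · simp [extendByZero, show n = d by omega]
  rw [one_sub_rankP_transpose_mulVec_apply, he _ (by omega), he _ (by omega), he _ (by omega)]
  push_cast
  ring

theorem rank_R_inv_rowsum_general (d : ℕ) (i : Fin d) :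
    (((1 : Matrix (Fin d) (Fin d) ℝ) - (rankP d)ᵀ)⁻¹ *ᵥ (fun _ => (1 : ℝ))) i =
      (i.val + 1) * ((d : ℝ) + 1 - (i.val + 1)) := by
  have hunit : IsUnit (1 - (rankP d)ᵀ).det := (isUnit_iff_isUnit_det _).mp
    (mulVec_injective_iff_isUnit.mp (one_sub_rankP_transpose_mulVec_injective d))
  rw [← one_sub_rankP_transpose_mulVec_parabola, mulVec_mulVec, nonsing_inv_mul _ hunit,
    one_mulVec]
  ring

/-- The row sums of `R⁻¹` for `R = I - Pᵀ` satisfy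
`(R⁻¹ 𝟏)_i = i (d+1-i)` for every `1 ≤ i ≤ d` (1-based indexing). -/
theorem rank_R_inv_rowsum (d : ℕ) (hd : 1 ≤ d) (i : Fin d) :
    (((1 : Matrix (Fin d) (Fin d) ℝ) - (rankP d)ᵀ)⁻¹ *ᵥ (fun _ => (1 : ℝ))) i =
      (i.val + 1) * ((d : ℝ) + 1 - (i.val + 1)) :=
  rank_R_inv_rowsum_general d i
end

section
/- Let τ₁, ..., τₙ be i.i.d. nonnegative random variables with E[e^{-ατ₁}] = exp(μ'A/(2σ'²) - (A/(2σ'))√(μ'²/σ'² + 2α)) for all α > 0, where σ', μ', A > 0. Then P(τ₁ + ... + τₙ < nA/(4μ')) ≤ exp(-nAμ'/(8σ'²)). -/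
open MeasureTheory ProbabilityTheory

/-! By independence and Chernoff's inequality, `P(∑ τₖ ≤ ε) ≤ e^{αε} ∏ E[e^{-ατₖ}]` for every
`α > 0`. For `ε = nA/(4μ')` the resulting exponent
`αε + n (μ'A/(2σ'²) - (A/(2σ')) √(μ'²/σ'² + 2α))` is minimised at `α = 3μ'²/(2σ'²)`, where the
square root equals `2μ'/σ'`. The integrability of `e^{-ατₖ}` needed for Chernoff is read off
the Laplace identity itself: a non-integrable function would have integral `0`. -/

namespace ProbabilityTheory

variable {Ω ι : Type*} [MeasurableSpace Ω] {μ : Measure Ω}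

theorem iIndepFun.measureReal_sum_le_le_exp_mul_prod_mgf {X : ι → Ω → ℝ}
    (h_indep : iIndepFun X μ) (h_meas : ∀ i, Measurable (X i)) {s : Finset ι} {t : ℝ}
    (ht : t ≤ 0) (h_int : ∀ i ∈ s, Integrable (fun ω => Real.exp (t * X i ω)) μ) (ε : ℝ) :
    μ.real {ω | ∑ i ∈ s, X i ω ≤ ε} ≤ Real.exp (-t * ε) * ∏ i ∈ s, mgf (X i) μ t := by
  have : IsProbabilityMeasure μ := h_indep.isProbabilityMeasure
  have h := measure_le_le_exp_mul_mgf ε ht (h_indep.integrable_exp_mul_sum h_meas h_int)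
  simpa only [Finset.sum_apply, h_indep.mgf_sum h_meas] using h

end ProbabilityTheory

theorem laplace_exponent_at_optimum {σ μ : ℝ} (hσ : 0 < σ) (hμ : 0 < μ) (A : ℝ) :
    μ * A / (2 * σ ^ 2) - A / (2 * σ) * √(μ ^ 2 / σ ^ 2 + 2 * (3 * μ ^ 2 / (2 * σ ^ 2))) =
      -(μ * A) / (2 * σ ^ 2) := by
  have hsqrt : √(μ ^ 2 / σ ^ 2 + 2 * (3 * μ ^ 2 / (2 * σ ^ 2))) = 2 * μ / σ := by
    rw [Real.sqrt_eq_iff_eq_sq (by positivity) (by positivity)]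
    field_simp
    ring
  rw [hsqrt]
  field_simp
  ring

theorem sum_hitting_times_lower_tail_general {Ω : Type*} [MeasurableSpace Ω]
    (P : Measure Ω) [IsProbabilityMeasure P]
    (σ' μ' A : ℝ) (hσ : 0 < σ') (hμ : 0 < μ')
    (n : ℕ) (τ : Fin n → Ω → ℝ)
    (hmeas : ∀ k, Measurable (τ k))
    (hindep : iIndepFun τ P)
    (hlaplace : ∀ k, ∀ α : ℝ, 0 < α →
      ∫ ω, Real.exp (-α * τ k ω) ∂P =
        Real.exp (μ' * A / (2 * σ' ^ 2) -
          A / (2 * σ') * Real.sqrt (μ' ^ 2 / σ' ^ 2 + 2 * α))) :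
    P {ω | ∑ k, τ k ω < n * A / (4 * μ')} ≤
      ENNReal.ofReal (Real.exp (-(n * A * μ') / (8 * σ' ^ 2))) := by
  set α : ℝ := 3 * μ' ^ 2 / (2 * σ' ^ 2)
  have hα : 0 < α := by positivity
  have hmgf : ∀ k, mgf (τ k) P (-α) = Real.exp (-(μ' * A) / (2 * σ' ^ 2)) := fun k => by
    rw [mgf, hlaplace k α hα, laplace_exponent_at_optimum hσ hμ]
  have hint : ∀ k ∈ Finset.univ, Integrable (fun ω => Real.exp (-α * τ k ω)) P := fun k _ =>
    .of_integral_ne_zero (by rw [hlaplace k α hα]; positivity)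
  have hchernoff := hindep.measureReal_sum_le_le_exp_mul_prod_mgf hmeas (neg_nonpos.2 hα.le)
    hint (n * A / (4 * μ'))
  have hexponent : -(-α) * (n * A / (4 * μ')) + n * (-(μ' * A) / (2 * σ' ^ 2)) =
      -(n * A * μ') / (8 * σ' ^ 2) := by
    simp only [α]
    field_simp
    ring
  rw [Finset.prod_congr rfl fun k _ => hmgf k, Finset.prod_const, Finset.card_univ,
    Fintype.card_fin, ← Real.exp_nat_mul, ← Real.exp_add, hexponent] at hchernoff
  calc P {ω | ∑ k, τ k ω < n * A / (4 * μ')}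
      ≤ P {ω | ∑ k, τ k ω ≤ n * A / (4 * μ')} := measure_mono (Set.ofPred_subset_ofPred.2 fun _ => le_of_lt)
    _ ≤ _ := by rwa [← ofReal_measureReal, ENNReal.ofReal_le_ofReal_iff (Real.exp_pos _).le]

/-- Let `τ₁, …, τₙ` be i.i.d. nonnegative random variables with
Laplace transform `E[e^{-ατ₁}] = exp(μ'A/(2σ'²) - (A/(2σ'))√(μ'²/σ'² + 2α))` for all
`α > 0`, where `σ', μ', A > 0`.  Then
`P(τ₁ + ⋯ + τₙ < nA/(4μ')) ≤ exp(-nAμ'/(8σ'²))`. -/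
theorem sum_hitting_times_lower_tail {Ω : Type*} [MeasurableSpace Ω]
    (P : Measure Ω) [IsProbabilityMeasure P]
    (σ' μ' A : ℝ) (hσ : 0 < σ') (hμ : 0 < μ') (hA : 0 < A)
    (n : ℕ) (τ : Fin n → Ω → ℝ)
    (hmeas : ∀ k, Measurable (τ k))
    (hnonneg : ∀ k ω, 0 ≤ τ k ω)
    (hindep : iIndepFun τ P)
    (hident : ∀ k l, Measure.map (τ k) P = Measure.map (τ l) P)
    (hlaplace : ∀ k, ∀ α : ℝ, 0 < α →
      ∫ ω, Real.exp (-α * τ k ω) ∂P =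
        Real.exp (μ' * A / (2 * σ' ^ 2) -
          A / (2 * σ') * Real.sqrt (μ' ^ 2 / σ' ^ 2 + 2 * α))) :
    P {ω | ∑ k, τ k ω < n * A / (4 * μ')} ≤
      ENNReal.ofReal (Real.exp (-(n * A * μ') / (8 * σ' ^ 2))) :=
  sum_hitting_times_lower_tail_general P σ' μ' A hσ hμ n τ hmeas hindep hlaplace
end

section
/- Let v > 0 in ℝ^d and σ_i > 0, and define Λ(v) = min_i v_i²/σ_i², φ(v) = 2(Σ_i v_i²σ_i^{-2})/(min_i v_i²σ_i^{-2}), and T(v) = (Λ(v) + log φ(v))/Λ(v). Define s(v) by (s(v))_i = σ_i · min_k (v_k/σ_k). Then Λ(s(v)) = Λ(v), φ(s(v)) = 2d ≤ φ(v), and consequently T(s(v)) ≤ T(v). -/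
/-- With `Λ(v) = minᵢ vᵢ²/σᵢ²`,
`φ(v) = 2(Σᵢ vᵢ²σᵢ⁻²)/(minᵢ vᵢ²σᵢ⁻²)`, `T(v) = (Λ(v) + log φ(v))/Λ(v)`, and
`s(v)ᵢ = σᵢ · minₖ (vₖ/σₖ)`, we have `Λ(s(v)) = Λ(v)`, `φ(s(v)) = 2d ≤ φ(v)`, and
consequently `T(s(v)) ≤ T(v)`. -/
theorem symmetrized_drift {d : ℕ} (hd : 0 < d) (v σ : Fin d → ℝ)
    (hv : ∀ i, 0 < v i) (hσ : ∀ i, 0 < σ i)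
    (Λ : (Fin d → ℝ) → ℝ)
    (hΛ : ∀ u : Fin d → ℝ,
      Λ u = Finset.univ.inf' ⟨⟨0, hd⟩, Finset.mem_univ _⟩ (fun i => u i ^ 2 / σ i ^ 2))
    (φ : (Fin d → ℝ) → ℝ)
    (hφ : ∀ u : Fin d → ℝ, φ u = 2 * (∑ i, u i ^ 2 / σ i ^ 2) /
      (Finset.univ.inf' ⟨⟨0, hd⟩, Finset.mem_univ _⟩ (fun i => u i ^ 2 / σ i ^ 2)))
    (T : (Fin d → ℝ) → ℝ)
    (hT : ∀ u : Fin d → ℝ, T u = (Λ u + Real.log (φ u)) / Λ u)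
    (s : Fin d → ℝ)
    (hs : ∀ i, s i = σ i * Finset.univ.inf' ⟨⟨0, hd⟩, Finset.mem_univ _⟩
      (fun k => v k / σ k)) :
    Λ s = Λ v ∧ φ s = 2 * d ∧ 2 * (d : ℝ) ≤ φ v ∧ T s ≤ T v := by
  set ne : (Finset.univ : Finset (Fin d)).Nonempty := ⟨⟨0, hd⟩, Finset.mem_univ _⟩
  set m : ℝ := Finset.univ.inf' ne (fun k => v k / σ k) with hm
  have hm_pos : 0 < m := by
    rw [hm, Finset.lt_inf'_iff]
    exact fun i _ => div_pos (hv i) (hσ i)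
  have hm_le : ∀ i, m ≤ v i / σ i := fun i =>
    Finset.inf'_le _ (Finset.mem_univ i)
  -- Λ v = m ^ 2
  have hΛv : Λ v = m ^ 2 := by
    rw [hΛ]
    apply le_antisymm
    · obtain ⟨j, _, hj⟩ := Finset.exists_mem_eq_inf' ne (fun k => v k / σ k)
      calc Finset.univ.inf' ne (fun i => v i ^ 2 / σ i ^ 2)
          ≤ v j ^ 2 / σ j ^ 2 := Finset.inf'_le _ (Finset.mem_univ j)
        _ = (v j / σ j) ^ 2 := by rw [div_pow]
        _ = m ^ 2 := by rw [hm, hj]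
    · apply Finset.le_inf'
      intro i _
      have : m ^ 2 ≤ (v i / σ i) ^ 2 :=
        pow_le_pow_left₀ hm_pos.le (hm_le i) 2
      rwa [div_pow] at this
  have hΛv_pos : 0 < Λ v := hΛv ▸ pow_pos hm_pos 2
  -- s i ^ 2 / σ i ^ 2 = m ^ 2
  have hsq : ∀ i, s i ^ 2 / σ i ^ 2 = m ^ 2 := by
    intro i
    rw [hs i, mul_pow, mul_comm, mul_div_assoc,
      div_self (pow_ne_zero 2 (hσ i).ne'), mul_one]
  have hΛs : Λ s = m ^ 2 := by
    rw [hΛ]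
    have : (fun i => s i ^ 2 / σ i ^ 2) = fun _ : Fin d => m ^ 2 := funext hsq
    rw [this, Finset.inf'_const]
  have h1 : Λ s = Λ v := by rw [hΛs, hΛv]
  have hsum_s : (∑ i, s i ^ 2 / σ i ^ 2) = d * m ^ 2 := by
    simp [hsq]
  have hφs : φ s = 2 * d := by
    rw [hφ, ← hΛ, hΛs, hsum_s]
    field_simp
  have hsum_v : (d : ℝ) * m ^ 2 ≤ ∑ i, v i ^ 2 / σ i ^ 2 := by
    calc (d : ℝ) * m ^ 2 = ∑ _i : Fin d, m ^ 2 := by simp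
      _ ≤ ∑ i, v i ^ 2 / σ i ^ 2 := by
          apply Finset.sum_le_sum
          intro i _
          have : m ^ 2 ≤ (v i / σ i) ^ 2 := pow_le_pow_left₀ hm_pos.le (hm_le i) 2
          rwa [div_pow] at this
  have hφv : 2 * (d : ℝ) ≤ φ v := by
    rw [hφ, ← hΛ, hΛv]
    rw [le_div_iff₀ (pow_pos hm_pos 2)]
    nlinarith
  have hTle : T s ≤ T v := by
    rw [hT, hT, h1]
    have hlog : Real.log (φ s) ≤ Real.log (φ v) := by
      rw [hφs]
      exact Real.log_le_log (by positivity) hφv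
    gcongr
  exact ⟨h1, hφs, hφv, hTle⟩
end
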